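/- arXiv:1712.10078 — 6 statements merged into one kernel-verified Lean document; each statement's English description precedes it below -/
import Mathlib

section
/- For integers d ≥ 3 and N ≥ 0, the sum ∑_{n=0}^{N-1} k_d(n) * (Λ_N - Λ_n), where Λ_n = n(n+d-2) and k_d(n) = (1/(d-2)) * C(n+d-3, d-3) * (2n+d-2), equals ((2N+d-1)(2N+d-3)/(d+1)) * C(N+d-2, d-1). -/
/-!
Summation by parts: passing from `N` to `N + 1` adds `(Λ_{N+1} - Λ_N) · ∑_{n ≤ N} k_d(n)` to the
sum, and `Λ_{N+1} - Λ_N = 2N + d - 1`. The cumulative multiplicity `∑_{n < N} k_d(n)` (the dimension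
of the polynomials of degree `< N` restricted to the sphere) has the closed form
`(2N + d - 3) / (d - 1) · C(N + d - 3, d - 2)`, so both the sum and the right-hand side satisfy the
same first-order recurrence, which reduces to the relations `(n + 1) C(n, k) = (k + 1) C(n + 1, k + 1)`
and `(k + 1) C(n + k, k + 1) = n C(n + k, k)`.
-/

/-- Multiplicity of spherical harmonics of degree `n` on `S^{d-1}`. -/
noncomputable def sphMult (d n : ℕ) : ℚ :=
  (1 / ((d : ℚ) - 2)) * (Nat.choose (n + d - 3) (d - 3) : ℚ) * (2 * n + (d : ℚ) - 2)

/-- Eigenvalue `Λ_n = n(n+d-2)` of the Laplacian on `S^{d-1}`. -/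
noncomputable def sphEig (d n : ℕ) : ℚ := (n : ℚ) * ((n : ℚ) + (d : ℚ) - 2)

open Finset

theorem Finset.sum_range_succ_mul_sub {R : Type*} [CommRing R] (f g : ℕ → R) (N : ℕ) :
    ∑ n ∈ range (N + 1), f n * (g (N + 1) - g n)
      = ∑ n ∈ range N, f n * (g N - g n) + (g (N + 1) - g N) * ∑ n ∈ range (N + 1), f n := by
  rw [sum_range_succ, sum_range_succ f, mul_add, mul_sum, ← add_assoc, ← sum_add_distrib]
  congr 1
  · exact sum_congr rfl fun n _ => by ring
  · ring

theorem Nat.add_choose_succ_mul (n k : ℕ) :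
    (n + k).choose (k + 1) * (k + 1) = (n + k).choose k * n := by
  rw [choose_succ_right_eq, Nat.add_sub_cancel]

theorem sphEig_succ_sub (d N : ℕ) : sphEig d (N + 1) - sphEig d N = 2 * N + d - 1 := by
  simp only [sphEig]
  push_cast
  ring

theorem sum_range_sphMult {d : ℕ} (hd : 3 ≤ d) (N : ℕ) :
    ∑ n ∈ range N, sphMult d n
      = (2 * N + d - 3) / (d - 1) * ((N + d - 3).choose (d - 2) : ℚ) := by
  obtain ⟨e, rfl⟩ := Nat.exists_eq_add_of_le' hd
  induction N with
  | zero => simp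
  | succ N ih =>
    rw [sum_range_succ, ih]
    simp only [sphMult, show ∀ m, m + (e + 3) - 3 = m + e from fun m => by omega,
      show e + 3 - 2 = e + 1 by omega, show e + 3 - 3 = e by omega,
      show N + 1 + e = N + e + 1 by omega]
    have h1 : (N + e + 1 : ℚ) * (N + e).choose e = (N + e + 1).choose (e + 1) * (e + 1) := by
      exact_mod_cast (N + e).add_one_mul_choose_eq e
    have h2 : ((N + e).choose (e + 1) : ℚ) * (e + 1) = (N + e).choose e * N := by
      exact_mod_cast N.add_choose_succ_mul e
    push_cast [add_sub_assoc]
    field_simp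
    linear_combination (2 * N + e + 2 : ℚ) * h1 + (2 * N + e : ℚ) * h2

theorem sum_mult_eig_diff_rhs_succ {d : ℕ} (hd : 3 ≤ d) (N : ℕ) :
    (2 * ((N : ℚ) + 1) + d - 1) * (2 * ((N : ℚ) + 1) + d - 3) / (d + 1)
        * ((N + 1 + d - 2).choose (d - 1) : ℚ)
      = (2 * N + d - 1) * (2 * N + d - 3) / (d + 1) * ((N + d - 2).choose (d - 1) : ℚ)
        + (2 * N + d - 1) * ((2 * ((N : ℚ) + 1) + d - 3) / (d - 1)
          * ((N + 1 + d - 3).choose (d - 2) : ℚ)) := by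
  obtain ⟨e, rfl⟩ := Nat.exists_eq_add_of_le' hd
  simp only [show N + 1 + (e + 3) - 3 = N + e + 1 by omega,
    show N + (e + 3) - 2 = N + e + 1 by omega, show N + 1 + (e + 3) - 2 = N + e + 2 by omega,
    show e + 3 - 2 = e + 1 by omega, show e + 3 - 1 = e + 2 by omega]
  have h1 : ((N + e + 2).choose (e + 2) : ℚ) * (e + 2) = (N + e + 2) * (N + e + 1).choose (e + 1) := by
    exact_mod_cast ((N + e + 1).add_one_mul_choose_eq (e + 1)).symm
  have h2 : ((N + e + 1).choose (e + 2) : ℚ) * (e + 2) = (N + e + 1).choose (e + 1) * N := by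
    exact_mod_cast N.add_choose_succ_mul (e + 1)
  push_cast [add_sub_assoc]
  field_simp
  linear_combination (2 * N + e + 2 : ℚ) * ((2 * N + e + 4) * h1 - (2 * N + e) * h2)

theorem sum_mult_eig_diff (d N : ℕ) (hd : 3 ≤ d) :
    ∑ n ∈ Finset.range N, sphMult d n * (sphEig d N - sphEig d n)
      = (2 * (N : ℚ) + d - 1) * (2 * (N : ℚ) + d - 3) / ((d : ℚ) + 1)
        * (Nat.choose (N + d - 2) (d - 1) : ℚ) := by
  induction N with
  | zero => simp [Nat.choose_eq_zero_of_lt (show d - 2 < d - 1 by omega)]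
  | succ N ih =>
    rw [sum_range_succ_mul_sub, ih, sphEig_succ_sub, sum_range_sphMult hd]
    push_cast
    exact (sum_mult_eig_diff_rhs_succ hd N).symm
end

section
/- For integers d ≥ 4 and N ≥ 1, the following strict inequality of real numbers holds: (N + (d-1)/2) * (N + (d-3)/2) * ∏_{j=0}^{d-3} (N + j) > (N(N+d-2))^{(d+1)/2}, where the right-hand side uses the real power with exponent (d+1)/2. -/
theorem product_gt_rpow (d N : ℕ) (hd : 4 ≤ d) (hN : 1 ≤ N) :
    ((N : ℝ) + ((d : ℝ) - 1) / 2) * ((N : ℝ) + ((d : ℝ) - 3) / 2)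
        * ∏ j ∈ Finset.range (d - 1), ((N : ℝ) + (j : ℝ))
      > ((N : ℝ) * ((N : ℝ) + (d : ℝ) - 2)) ^ (((d : ℝ) + 1) / 2) := by
  have hx : (1 : ℝ) ≤ (N : ℝ) := by exact_mod_cast hN
  have hd' : (4 : ℝ) ≤ (d : ℝ) := by exact_mod_cast hd
  set x : ℝ := (N : ℝ) with hxdef
  set M : ℝ := x * (x + (d : ℝ) - 2) with hMdef
  have hMpos : 0 < M := by
    have : (0:ℝ) < x + (d:ℝ) - 2 := by linarith
    have hx0 : (0:ℝ) < x := by linarith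
    exact mul_pos hx0 this
  set Q : ℝ := ∏ j ∈ Finset.range (d - 1), (x + (j : ℝ)) with hQdef
  have hQpos : 0 < Q := by
    apply Finset.prod_pos
    intro j _
    have : (0:ℝ) ≤ (j:ℝ) := Nat.cast_nonneg j
    linarith
  set P : ℝ := (x + ((d : ℝ) - 1) / 2) * (x + ((d : ℝ) - 3) / 2) with hPdef
  have hPM : M < P := by
    rw [hPdef, hMdef]; nlinarith [sq_nonneg ((d:ℝ) - 2)]
  have hPpos : 0 < P := lt_trans hMpos hPM
  -- Q^2 ≥ M^(d-1)
  have hQ2 : M ^ (d - 1) ≤ Q ^ 2 := by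
    have hrefl : ∏ j ∈ Finset.range (d - 1), (x + ((d - 2 - j : ℕ) : ℝ)) = Q := by
      rw [hQdef]
      rw [← Finset.prod_range_reflect (fun j => (x + (j : ℝ))) (d - 1)]
      apply Finset.prod_congr rfl
      intro j _
      have : d - 1 - 1 - j = d - 2 - j := by omega
      rw [this]
    have : Q ^ 2 = ∏ j ∈ Finset.range (d - 1), (x + (j : ℝ)) * (x + ((d - 2 - j : ℕ) : ℝ)) := by
      rw [Finset.prod_mul_distrib, hrefl, hQdef, sq]
    rw [this]
    calc M ^ (d - 1) = ∏ _j ∈ Finset.range (d - 1), M := by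
          rw [Finset.prod_const, Finset.card_range]
      _ ≤ _ := by
          apply Finset.prod_le_prod (fun j _ => hMpos.le)
          intro j hj
          have hjle : j ≤ d - 2 := by
            have := Finset.mem_range.mp hj; omega
          have hcast : ((d - 2 - j : ℕ) : ℝ) = (d : ℝ) - 2 - (j : ℝ) := by
            have h1 : (d - 2 - j) + j + 2 = d := by omega
            have := congrArg (fun n : ℕ => (n : ℝ)) h1
            push_cast at this
            linarith
          rw [hcast, hMdef]
          have hj0 : (0:ℝ) ≤ (j:ℝ) := Nat.cast_nonneg j
          have hj1 : (j:ℝ) ≤ (d:ℝ) - 2 := by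
            have : (j:ℝ) ≤ ((d - 2 : ℕ) : ℝ) := by exact_mod_cast hjle
            have h2 : ((d - 2 : ℕ) : ℝ) = (d:ℝ) - 2 := by
              have : (d - 2) + 2 = d := by omega
              have := congrArg (fun n : ℕ => (n : ℝ)) this
              push_cast at this
              linarith
            linarith [h2 ▸ this]
          nlinarith
  -- squared inequality
  have hLHSpos : 0 < P * Q := mul_pos hPpos hQpos
  have hRHSpos : 0 < M ^ (((d : ℝ) + 1) / 2) := Real.rpow_pos_of_pos hMpos _
  have hsq : (M ^ (((d : ℝ) + 1) / 2)) ^ 2 < (P * Q) ^ 2 := by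
    have hrw : (M ^ (((d : ℝ) + 1) / 2)) ^ 2 = M ^ (d + 1) := by
      rw [← Real.rpow_natCast (M ^ (((d : ℝ) + 1) / 2)) 2, ← Real.rpow_mul hMpos.le,
        ← Real.rpow_natCast M (d + 1)]
      congr 1
      push_cast
      ring
    rw [hrw]
    calc M ^ (d + 1) = M ^ 2 * M ^ (d - 1) := by
          rw [← pow_add]; congr 1; omega
      _ < P ^ 2 * M ^ (d - 1) := by
          apply mul_lt_mul_of_pos_right _ (pow_pos hMpos _)
          exact pow_lt_pow_left₀ hPM hMpos.le (by norm_num)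
      _ ≤ P ^ 2 * Q ^ 2 := by
          apply mul_le_mul_of_nonneg_left hQ2 (by positivity)
      _ = (P * Q) ^ 2 := (mul_pow P Q 2).symm
  exact lt_of_pow_lt_pow_left₀ 2 hLHSpos.le hsq
end

section
/- For every real λ ≥ 0, ∑_{n=0}^{∞} (λ - n(n+1))_+ * (2n+1) ≥ λ²/2, with equality when λ = N(N+1) for some nonnegative integer N. Here x_+ = max(x, 0). -/
lemma berezin_sum_formula (lam : ℝ) (K : ℕ) :
    ∑ n ∈ Finset.range K, (lam - (n : ℝ) * ((n : ℝ) + 1)) * (2 * (n : ℝ) + 1)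
      = lam * (K : ℝ) ^ 2 - (K : ℝ) ^ 2 * ((K : ℝ) ^ 2 - 1) / 2 := by
  induction K with
  | zero => simp
  | succ k ih =>
      rw [Finset.sum_range_succ, ih]
      push_cast
      ring

lemma berezin_tsum_eq (lam : ℝ) (K : ℕ) (hub : lam ≤ (K : ℝ) * ((K : ℝ) + 1))
    (hlb : ∀ n : ℕ, n < K → (n : ℝ) * ((n : ℝ) + 1) ≤ lam) :
    ∑' n : ℕ, max (lam - (n : ℝ) * ((n : ℝ) + 1)) 0 * (2 * (n : ℝ) + 1)
      = lam * (K : ℝ) ^ 2 - (K : ℝ) ^ 2 * ((K : ℝ) ^ 2 - 1) / 2 := by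
  rw [tsum_eq_sum (s := Finset.range K) ?_]
  · rw [← berezin_sum_formula lam K]
    apply Finset.sum_congr rfl
    intro n hn
    rw [max_eq_left]
    linarith [hlb n (Finset.mem_range.mp hn)]
  · intro n hn
    have hKn : K ≤ n := by simpa [Finset.mem_range, not_lt] using hn
    have hKR : (K : ℝ) ≤ (n : ℝ) := by exact_mod_cast hKn
    have h2 : (K : ℝ) * ((K : ℝ) + 1) ≤ (n : ℝ) * ((n : ℝ) + 1) := by
      nlinarith [Nat.cast_nonneg (α := ℝ) K]
    rw [max_eq_right (by linarith)]
    ring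

theorem berezin_sum_ge (lam : ℝ) (h0 : 0 ≤ lam) :
    (∑' n : ℕ, max (lam - (n : ℝ) * ((n : ℝ) + 1)) 0 * (2 * (n : ℝ) + 1) ≥ lam ^ 2 / 2)
    ∧ (∀ N : ℕ, lam = (N : ℝ) * ((N : ℝ) + 1) →
        ∑' n : ℕ, max (lam - (n : ℝ) * ((n : ℝ) + 1)) 0 * (2 * (n : ℝ) + 1)
          = lam ^ 2 / 2) := by
  classical
  constructor
  · obtain ⟨m, hm⟩ := exists_nat_ge lam
    have hex : ∃ k : ℕ, lam ≤ (k : ℝ) * ((k : ℝ) + 1) :=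
      ⟨m, by nlinarith [Nat.cast_nonneg (α := ℝ) m]⟩
    set K := Nat.find hex with hKdef
    have hub : lam ≤ (K : ℝ) * ((K : ℝ) + 1) := Nat.find_spec hex
    have hlb : ∀ n : ℕ, n < K → (n : ℝ) * ((n : ℝ) + 1) ≤ lam := fun n hn =>
      le_of_lt (lt_of_not_ge (Nat.find_min hex hn))
    rw [berezin_tsum_eq lam K hub hlb]
    rcases Nat.eq_zero_or_pos K with hK | hK
    · rw [hK] at hub ⊢
      push_cast at hub ⊢
      nlinarith
    · have h1 : ((K - 1 : ℕ) : ℝ) * (((K - 1 : ℕ) : ℝ) + 1) ≤ lam := hlb (K - 1) (by omega)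
      have hc : ((K - 1 : ℕ) : ℝ) = (K : ℝ) - 1 := by
        have : (1 : ℕ) ≤ K := hK
        push_cast [Nat.cast_sub this]
        ring
      rw [hc] at h1
      nlinarith [mul_nonneg (sub_nonneg.mpr h1) (sub_nonneg.mpr hub)]
  · intro N hN
    have hub : lam ≤ (N : ℝ) * ((N : ℝ) + 1) := le_of_eq hN
    have hlb : ∀ n : ℕ, n < N → (n : ℝ) * ((n : ℝ) + 1) ≤ lam := by
      intro n hn
      have hnR : (n : ℝ) < (N : ℝ) := by exact_mod_cast hn
      rw [hN]
      nlinarith [Nat.cast_nonneg (α := ℝ) n]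
    rw [berezin_tsum_eq lam N hub hlb, hN]
    ring
end

section
/- For every real λ ≥ 0, ∑_{n=1}^{∞} (λ - n(n+1))_+ * (2n+1) ≤ λ²/2, where x_+ = max(x, 0) and the sum starts at n = 1 (the zero mode is omitted). -/
lemma berezin_raw_sum (lam : ℝ) (K : ℕ) :
    ∑ n ∈ Finset.range K, (lam - ((n : ℝ) + 1) * ((n : ℝ) + 2)) * (2 * ((n : ℝ) + 1) + 1)
      = lam * K * (K + 2) - K * (K + 1) ^ 2 * (K + 2) / 2 := by
  induction K with
  | zero => simp
  | succ K ih =>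
    rw [Finset.sum_range_succ, ih]
    push_cast
    ring

lemma berezin_fin_sum_le (M : ℕ) : ∀ lam : ℝ, 0 ≤ lam → lam ≤ ((M : ℝ) + 1) * ((M : ℝ) + 2) →
    ∑ n ∈ Finset.range M, max (lam - ((n : ℝ) + 1) * ((n : ℝ) + 2)) 0 * (2 * ((n : ℝ) + 1) + 1)
      ≤ lam ^ 2 / 2 := by
  induction M with
  | zero => intro lam h0 _; simpa using by positivity
  | succ M ih =>
    intro lam h0 hle
    by_cases hc : lam ≤ ((M : ℝ) + 1) * ((M : ℝ) + 2)
    · rw [Finset.sum_range_succ]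
      have hz : max (lam - ((M : ℝ) + 1) * ((M : ℝ) + 2)) 0 = 0 := by
        apply max_eq_right; linarith
      rw [hz]
      simpa using ih lam h0 hc
    · push_neg at hc
      have heq : ∑ n ∈ Finset.range (M + 1),
          max (lam - ((n : ℝ) + 1) * ((n : ℝ) + 2)) 0 * (2 * ((n : ℝ) + 1) + 1)
          = ∑ n ∈ Finset.range (M + 1),
          (lam - ((n : ℝ) + 1) * ((n : ℝ) + 2)) * (2 * ((n : ℝ) + 1) + 1) := by
        apply Finset.sum_congr rfl
        intro n hn
        have hn' : n ≤ M := Nat.lt_succ_iff.mp (Finset.mem_range.mp hn)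
        have hn'' : (n : ℝ) ≤ (M : ℝ) := by exact_mod_cast hn'
        have : ((n : ℝ) + 1) * ((n : ℝ) + 2) ≤ ((M : ℝ) + 1) * ((M : ℝ) + 2) := by
          nlinarith [Nat.cast_nonneg (α := ℝ) n]
        rw [max_eq_left]; linarith
      rw [heq, berezin_raw_sum]
      have hM : (0 : ℝ) ≤ (M : ℝ) := Nat.cast_nonneg M
      push_cast
      nlinarith [sq_nonneg (lam - ((M : ℝ) + 1) * ((M : ℝ) + 3))]

theorem berezin_sum_no_zero_mode_le (lam : ℝ) (h0 : 0 ≤ lam) :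
    ∑' n : ℕ, max (lam - ((n : ℝ) + 1) * ((n : ℝ) + 2)) 0 * (2 * ((n : ℝ) + 1) + 1)
      ≤ lam ^ 2 / 2 := by
  set M := ⌈lam⌉₊ with hM
  have hlM : lam ≤ (M : ℝ) := Nat.le_ceil lam
  have hsum : ∑' n : ℕ, max (lam - ((n : ℝ) + 1) * ((n : ℝ) + 2)) 0 * (2 * ((n : ℝ) + 1) + 1)
      = ∑ n ∈ Finset.range M,
        max (lam - ((n : ℝ) + 1) * ((n : ℝ) + 2)) 0 * (2 * ((n : ℝ) + 1) + 1) := by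
    apply tsum_eq_sum
    intro n hn
    have hn' : M ≤ n := Nat.le_of_not_lt (fun h => hn (Finset.mem_range.mpr h))
    have hn'' : (M : ℝ) ≤ (n : ℝ) := by exact_mod_cast hn'
    have hz : max (lam - ((n : ℝ) + 1) * ((n : ℝ) + 2)) 0 = 0 := by
      apply max_eq_right
      nlinarith [Nat.cast_nonneg (α := ℝ) n]
    rw [hz, zero_mul]
  rw [hsum]
  apply berezin_fin_sum_le M lam h0
  nlinarith [Nat.cast_nonneg (α := ℝ) M]
end

section
/- For every real p ≥ 0 and every positive integer N with 2α(N-1)² ≤ p ≤ 2αN² (α > 0 real), the inequality N(N-1)(p - αN(N-1)) ≥ (p/(4α))(p - 2α) holds. -/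
theorem legendre_lower_bound (α : ℝ) (hα : 0 < α) (p : ℝ) (hp : 0 ≤ p)
    (N : ℕ) (hN : 1 ≤ N)
    (h1 : 2 * α * ((N : ℝ) - 1) ^ 2 ≤ p) (h2 : p ≤ 2 * α * (N : ℝ) ^ 2) :
    (N : ℝ) * ((N : ℝ) - 1) * (p - α * (N : ℝ) * ((N : ℝ) - 1))
      ≥ p / (4 * α) * (p - 2 * α) := by
  have hα4 : (0:ℝ) < 4 * α := by linarith
  rw [ge_iff_le, div_mul_eq_mul_div, div_le_iff₀ hα4]
  nlinarith [mul_nonneg (sub_nonneg.2 h1) (sub_nonneg.2 h2), sq_nonneg ((N:ℝ) - 1), hα.le]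
end

section
/- Let (μ_j)_{j≥1} be a nondecreasing sequence of nonnegative reals with μ_j → ∞, and suppose ∑_{j=1}^∞ (λ - μ_j)_+ ≥ C λ² for all λ ≥ 0, where C > 0. Then for every positive integer n, ∑_{k=1}^n μ_k ≤ n²/(4C). -/
theorem neumann_liyau_from_berezin (μ : ℕ → ℝ) (hmono : Monotone μ)
    (hnonneg : ∀ j, 0 ≤ μ j)
    (htend : Filter.Tendsto μ Filter.atTop Filter.atTop)
    (C : ℝ) (hC : 0 < C)
    (hberezin : ∀ lam : ℝ, 0 ≤ lam →
        C * lam ^ 2 ≤ ∑' j : ℕ, max (lam - μ j) 0) :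
    ∀ n : ℕ, 1 ≤ n → ∑ k ∈ Finset.range n, μ k ≤ (n : ℝ) ^ 2 / (4 * C) := by
  intro n hn
  set lam := μ (n - 1) with hlam
  have hlam0 : 0 ≤ lam := hnonneg _
  have hsupp : ∀ j ∉ Finset.range n, max (lam - μ j) 0 = 0 := by
    intro j hj
    simp only [Finset.mem_range, not_lt] at hj
    have h1 : lam ≤ μ j := hmono (le_trans (Nat.sub_le n 1) hj)
    simp [max_eq_right, sub_nonpos.mpr h1]
  have htsum : (∑' j : ℕ, max (lam - μ j) 0) = ∑ k ∈ Finset.range n, (lam - μ k) := by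
    rw [tsum_eq_sum hsupp]
    refine Finset.sum_congr rfl fun k hk => ?_
    have hk' : k ≤ n - 1 := Nat.le_sub_one_of_lt (Finset.mem_range.mp hk)
    have h2 : μ k ≤ lam := hmono hk'
    simp [max_eq_left, sub_nonneg.mpr h2]
  have key := hberezin lam hlam0
  rw [htsum, Finset.sum_sub_distrib, Finset.sum_const, Finset.card_range,
    nsmul_eq_mul] at key
  rw [le_div_iff₀ (by positivity)]
  nlinarith [sq_nonneg (2 * C * lam - n), hC]
end
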